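/- Let X and Y be n-dimensional inner product spaces and L : X → Y a linear operator. Then for every ε > 0, the covering number of L satisfies √(det(L* L)) · (1/ε)^n ≤ C(ε, L). -/

import Mathlib

/-!
Composing `L` with an isometry `Y ≃ X` gives an endomorphism `f` of `X` with
`√det(L* L) = ‖det f‖`. Viewed as a real-linear map of the `2n`-dimensional space `X`, `f` scales
Haar measure by `‖det f‖²`, while `k` balls of radius `ε` have measure at most `k ε^{2n}` times that
of the unit ball. Hence `(‖det f‖ ε⁻ⁿ)² ≤ k`, which gives `‖det f‖ ε⁻ⁿ ≤ k` because `k` is a natural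
number.
-/

open Pointwise Metric
open scoped ENNReal

/-- The covering number of an operator `L`: the minimal number `n` of points
`y₁,…,yₙ ∈ Y` such that `L(B_X)` is covered by the translates `yⱼ + ε • B_Y`. -/
noncomputable def covN {X Y : Type*} [SeminormedAddCommGroup X] [SeminormedAddCommGroup Y]
    [NormedSpace ℝ Y] (ε : ℝ) (L : X → Y) : ℕ∞ :=
  sInf {n : ℕ∞ | ∃ (k : ℕ) (y : Fin k → Y), (k : ℕ∞) = n ∧
    L '' closedBall 0 1 ⊆ ⋃ j, (y j +ᵥ ε • closedBall (0 : Y) 1)}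

theorem le_covN {X Y : Type*} [SeminormedAddCommGroup X] [SeminormedAddCommGroup Y]
    [NormedSpace ℝ Y] {ε : ℝ} {L : X → Y} {c : ℝ≥0∞}
    (h : ∀ (k : ℕ) (y : Fin k → Y),
      L '' closedBall 0 1 ⊆ ⋃ j, (y j +ᵥ ε • closedBall (0 : Y) 1) → c ≤ k) :
    c ≤ ((covN ε L : ℕ∞) : ℝ≥0∞) := by
  rcases Set.eq_empty_or_nonempty {n : ℕ∞ | ∃ (k : ℕ) (y : Fin k → Y), (k : ℕ∞) = n ∧
      L '' closedBall 0 1 ⊆ ⋃ j, (y j +ᵥ ε • closedBall (0 : Y) 1)} with hS | hS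
  · rw [covN, hS, sInf_empty, ENat.toENNReal_top]
    exact le_top
  · obtain ⟨k, y, hk, hcov⟩ := csInf_mem hS
    rw [covN, ← hk]
    exact h k y hcov

theorem LinearMap.sqrt_re_det_adjoint_comp_self {𝕜 X Y : Type*} [RCLike 𝕜]
    [NormedAddCommGroup X] [InnerProductSpace 𝕜 X] [FiniteDimensional 𝕜 X]
    [NormedAddCommGroup Y] [InnerProductSpace 𝕜 Y] [FiniteDimensional 𝕜 Y] (L : X →ₗ[𝕜] Y) :
    √(RCLike.re (L.adjoint ∘ₗ L).det) = L.normDet := by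
  rw [← L.normDet_sq, RCLike.ofReal_re, Real.sqrt_sq L.normDet_nonneg]

theorem LinearMap.normDet_linearIsometryEquiv_comp {𝕜 X Y Z : Type*} [RCLike 𝕜]
    [NormedAddCommGroup X] [InnerProductSpace 𝕜 X] [FiniteDimensional 𝕜 X]
    [NormedAddCommGroup Y] [InnerProductSpace 𝕜 Y] [FiniteDimensional 𝕜 Y]
    [NormedAddCommGroup Z] [InnerProductSpace 𝕜 Z] [FiniteDimensional 𝕜 Z]
    (L : X →ₗ[𝕜] Y) (e : Y ≃ₗᵢ[𝕜] Z) (h : Module.finrank 𝕜 X = Module.finrank 𝕜 Y) :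
    (e.toLinearMap ∘ₗ L).normDet = L.normDet := by
  rw [normDet_comp_of_finrank_eq L _ h,
    show e.toLinearMap.normDet = 1 from e.toLinearIsometry.normDet_eq_one, one_mul]

section Volume

open MeasureTheory

variable {E : Type*} [NormedAddCommGroup E] [NormedSpace ℝ E] [FiniteDimensional ℝ E]

theorem MeasureTheory.Measure.addHaar_le_of_subset_iUnion_closedBall [MeasurableSpace E]
    [BorelSpace E] (μ : Measure E) [μ.IsAddHaarMeasure] {s : Set E} {k : ℕ} {y : Fin k → E}
    {ε : ℝ} (hε : 0 ≤ ε) (hs : s ⊆ ⋃ j, closedBall (y j) ε) :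
    μ s ≤ k * ENNReal.ofReal (ε ^ Module.finrank ℝ E) * μ (closedBall 0 1) :=
  calc μ s ≤ ∑ j, μ (closedBall (y j) ε) := (measure_mono hs).trans (measure_iUnion_fintype_le _ _)
    _ = k * ENNReal.ofReal (ε ^ Module.finrank ℝ E) * μ (closedBall 0 1) := by
      simp_rw [μ.addHaar_closedBall' _ hε, Finset.sum_const, Finset.card_univ, Fintype.card_fin,
        nsmul_eq_mul, mul_assoc]

theorem LinearMap.abs_det_le_of_image_closedBall_subset_iUnion (A : E →ₗ[ℝ] E) {k : ℕ}
    {y : Fin k → E} {ε : ℝ} (hε : 0 ≤ ε) (hA : A '' closedBall 0 1 ⊆ ⋃ j, closedBall (y j) ε) :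
    |A.det| ≤ k * ε ^ Module.finrank ℝ E := by
  borelize E
  let μ : Measure E := Measure.addHaar
  have hB₀ : μ (closedBall 0 1) ≠ 0 := (measure_closedBall_pos μ 0 one_pos).ne'
  have hB : μ (closedBall 0 1) ≠ ⊤ := measure_closedBall_lt_top.ne
  have key := μ.addHaar_le_of_subset_iUnion_closedBall hε hA
  rw [μ.addHaar_image_linearMap, ENNReal.mul_le_mul_iff_left hB₀ hB, ← ENNReal.ofReal_natCast,
    ← ENNReal.ofReal_mul (Nat.cast_nonneg k)] at key
  exact (ENNReal.ofReal_le_ofReal_iff (by positivity)).mp key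

end Volume

theorem LinearMap.normSq_det_le_of_image_closedBall_subset_iUnion {V : Type*}
    [NormedAddCommGroup V] [NormedSpace ℂ V] [FiniteDimensional ℂ V] (f : V →ₗ[ℂ] V) {k : ℕ}
    {y : Fin k → V} {ε : ℝ} (hε : 0 ≤ ε) (hf : f '' closedBall 0 1 ⊆ ⋃ j, closedBall (y j) ε) :
    Complex.normSq f.det ≤ k * ε ^ (2 * Module.finrank ℂ V) := by
  have h := (f.restrictScalars ℝ).abs_det_le_of_image_closedBall_subset_iUnion hε hf
  rwa [LinearMap.det_restrictScalars, Algebra.norm_complex_apply,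
    abs_of_nonneg (Complex.normSq_nonneg _), finrank_real_of_complex] at h

theorem le_natCast_of_sq_le_natCast {t : ℝ} {k : ℕ} (ht : 0 ≤ t) (h : t ^ 2 ≤ k) : t ≤ k := by
  rcases k.eq_zero_or_pos with rfl | hk
  · rw [Nat.cast_zero] at h ⊢
    nlinarith
  · have hk : (1 : ℝ) ≤ k := by exact_mod_cast hk
    nlinarith

theorem det_le_covN {X Y : Type*} [NormedAddCommGroup X] [InnerProductSpace ℂ X]
    [NormedAddCommGroup Y] [InnerProductSpace ℂ Y]
    [FiniteDimensional ℂ X] [FiniteDimensional ℂ Y] (n : ℕ)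
    (hX : Module.finrank ℂ X = n) (hY : Module.finrank ℂ Y = n)
    (L : X →ₗ[ℂ] Y) (ε : ℝ) (hε : 0 < ε) :
    ENNReal.ofReal (Real.sqrt (((LinearMap.adjoint L).comp L).det.re) * (1 / ε) ^ n)
      ≤ ((covN ε ⇑L : ℕ∞) : ℝ≥0∞) := by
  let e : Y ≃ₗᵢ[ℂ] X := (stdOrthonormalBasis ℂ Y).equiv (stdOrthonormalBasis ℂ X)
    (finCongr (hY.trans hX.symm))
  let f : X →ₗ[ℂ] X := e.toLinearMap ∘ₗ L
  have hdet : √(((LinearMap.adjoint L).comp L).det.re) = ‖f.det‖ := by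
    rw [← f.normDet_eq_norm_det, L.normDet_linearIsometryEquiv_comp e (hX.trans hY.symm)]
    exact L.sqrt_re_det_adjoint_comp_self
  refine le_covN fun k y hcov => ?_
  have hcovX : f '' closedBall 0 1 ⊆ ⋃ j, closedBall (e (y j)) ε := by
    simp_rw [affinity_unitClosedBall hε.le] at hcov
    rw [LinearMap.coe_comp, Set.image_comp]
    refine (Set.image_mono hcov).trans ?_
    simp [Set.image_iUnion, e.image_closedBall]
  have hsq := f.normSq_det_le_of_image_closedBall_subset_iUnion hε.le hcovX
  rw [hX] at hsq
  rw [hdet, ← ENNReal.ofReal_natCast]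
  refine ENNReal.ofReal_le_ofReal (le_natCast_of_sq_le_natCast (by positivity) ?_)
  have hsq_eq : (‖f.det‖ * (1 / ε) ^ n) ^ 2 = Complex.normSq f.det / ε ^ (2 * n) := by
    rw [Complex.normSq_eq_norm_sq, mul_pow, ← pow_mul, one_div_pow, ← div_eq_mul_one_div,
      mul_comm n 2]
  rwa [hsq_eq, div_le_iff₀ (by positivity)]
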